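/- arXiv:2605.24404 — 3 statements merged into one kernel-verified Lean document; each statement's English description precedes it below -/
import Mathlib

section
/- Let E be a real Banach space and let p ∈ [2, ∞) be such that the p-Clarkson inequality holds: for all f, g ∈ E, ‖(f+g)/2‖^p + ‖(f−g)/2‖^p ≤ (1/2)‖f‖^p + (1/2)‖g‖^p. Then for every nonempty closed convex subset C ⊆ E there exists a unique element x ∈ C such that ‖x‖^p = inf{‖y‖^p : y ∈ C}. -/
/-- Let `E` be a real Banach space and `p ∈ [2, ∞)` such that the `p`-Clarkson
inequality holds. Then every nonempty closed convex subset `C ⊆ E` contains a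
unique element `x` with `‖x‖^p = inf {‖y‖^p : y ∈ C}`. -/
theorem exists_unique_norm_pow_minimizer_of_clarkson_ge_two
    (E : Type*) [NormedAddCommGroup E] [NormedSpace ℝ E] [CompleteSpace E]
    (p : ℝ) (hp : 2 ≤ p)
    (hClarkson : ∀ f g : E,
      ‖(2 : ℝ)⁻¹ • (f + g)‖ ^ p + ‖(2 : ℝ)⁻¹ • (f - g)‖ ^ p ≤
        (1 / 2) * ‖f‖ ^ p + (1 / 2) * ‖g‖ ^ p)
    (C : Set E) (hne : C.Nonempty) (hclosed : IsClosed C) (hconv : Convex ℝ C) :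
    ∃! x : E, x ∈ C ∧ ‖x‖ ^ p = sInf ((fun y => ‖y‖ ^ p) '' C) := by
  have hp0 : (0 : ℝ) < p := lt_of_lt_of_le (by norm_num) hp
  have hpne : p ≠ 0 := ne_of_gt hp0
  set S : Set ℝ := (fun y => ‖y‖ ^ p) '' C with hS
  set m : ℝ := sInf S with hm
  have hSne : S.Nonempty := hne.image _
  have hSbdd : BddBelow S := by
    refine ⟨0, fun s hs => ?_⟩
    obtain ⟨y, _, rfl⟩ := hs
    positivity
  have hmle : ∀ y ∈ C, m ≤ ‖y‖ ^ p := fun y hy => csInf_le hSbdd ⟨y, hy, rfl⟩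
  -- key inequality from Clarkson + convexity
  have key : ∀ f ∈ C, ∀ g ∈ C,
      ‖(2 : ℝ)⁻¹ • (f - g)‖ ^ p ≤ (1 / 2) * ‖f‖ ^ p + (1 / 2) * ‖g‖ ^ p - m := by
    intro f hf g hg
    have hmid : (2 : ℝ)⁻¹ • (f + g) ∈ C := by
      have := hconv hf hg (by norm_num : (0:ℝ) ≤ 1/2) (by norm_num : (0:ℝ) ≤ 1/2)
        (by norm_num)
      simpa [smul_add, one_div] using this
    have h1 := hmle _ hmid
    have h2 := hClarkson f g
    linarith
  -- half-norm rewriting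
  have hhalf : ∀ f g : E, ‖(2 : ℝ)⁻¹ • (f - g)‖ = ‖f - g‖ / 2 := by
    intro f g
    rw [norm_smul]
    simp [abs_of_nonneg]
    ring
  -- minimizing sequence
  have hseq : ∀ n : ℕ, ∃ y ∈ C, ‖y‖ ^ p < m + 1 / (n + 1) := by
    intro n
    have : m < m + 1 / (n + 1) := by
      have : (0:ℝ) < 1 / (n + 1) := by positivity
      linarith
    obtain ⟨s, hs, hslt⟩ := exists_lt_of_csInf_lt hSne this
    obtain ⟨y, hy, rfl⟩ := hs
    exact ⟨y, hy, hslt⟩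
  choose x hxC hxlt using hseq
  -- Cauchy
  have hb : Filter.Tendsto (fun N : ℕ => 2 * (1 / (N + 1) : ℝ) ^ p⁻¹)
      Filter.atTop (nhds 0) := by
    have h1 : Filter.Tendsto (fun N : ℕ => (1 / (N + 1) : ℝ)) Filter.atTop (nhds 0) :=
      tendsto_one_div_add_atTop_nhds_zero_nat
    have h2 := h1.rpow_const (Or.inr (by positivity : (0:ℝ) ≤ p⁻¹))
    rw [Real.zero_rpow (by positivity : p⁻¹ ≠ 0)] at h2
    simpa using h2.const_mul 2
  have hcauchy : CauchySeq x := by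
    apply cauchySeq_of_le_tendsto_0 (fun N : ℕ => 2 * (1 / (N + 1) : ℝ) ^ p⁻¹) _ hb
    intro n k N hn hk
    have hkey := key _ (hxC n) _ (hxC k)
    have hnN : (N : ℝ) ≤ n := Nat.cast_le.mpr hn
    have hkN : (N : ℝ) ≤ k := Nat.cast_le.mpr hk
    have hn' : (1 / (n + 1) : ℝ) ≤ 1 / (N + 1) :=
      one_div_le_one_div_of_le (by positivity) (by linarith)
    have hk' : (1 / (k + 1) : ℝ) ≤ 1 / (N + 1) :=
      one_div_le_one_div_of_le (by positivity) (by linarith)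
    have hbound : ‖(2 : ℝ)⁻¹ • (x n - x k)‖ ^ p ≤ 1 / (N + 1) := by
      have h1 := (hxlt n).le
      have h2 := (hxlt k).le
      nlinarith [hkey]
    have hnn : (0:ℝ) ≤ ‖(2 : ℝ)⁻¹ • (x n - x k)‖ := norm_nonneg _
    have : ‖(2 : ℝ)⁻¹ • (x n - x k)‖ ≤ (1 / (N + 1) : ℝ) ^ p⁻¹ := by
      calc ‖(2 : ℝ)⁻¹ • (x n - x k)‖
          = (‖(2 : ℝ)⁻¹ • (x n - x k)‖ ^ p) ^ p⁻¹ := by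
            rw [← Real.rpow_mul hnn, mul_inv_cancel₀ hpne, Real.rpow_one]
        _ ≤ (1 / (N + 1) : ℝ) ^ p⁻¹ :=
            Real.rpow_le_rpow (by positivity) hbound (by positivity)
    rw [dist_eq_norm]
    rw [hhalf] at this
    linarith
  obtain ⟨z, hz⟩ := cauchySeq_tendsto_of_complete hcauchy
  have hzC : z ∈ C := hclosed.mem_of_tendsto hz (Filter.Eventually.of_forall hxC)
  have hcont : Filter.Tendsto (fun n => ‖x n‖ ^ p) Filter.atTop (nhds (‖z‖ ^ p)) := by
    exact ((continuous_norm.tendsto z).comp hz).rpow_const (Or.inr hp0.le)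
  have hzval : ‖z‖ ^ p = m := by
    refine le_antisymm ?_ (hmle _ hzC)
    have hlim : Filter.Tendsto (fun n : ℕ => m + 1 / (n + 1) : ℕ → ℝ)
        Filter.atTop (nhds m) := by
      have := tendsto_one_div_add_atTop_nhds_zero_nat.const_add m
      simpa using this
    exact le_of_tendsto_of_tendsto hcont hlim
      (Filter.Eventually.of_forall fun n => (hxlt n).le)
  refine ⟨z, ⟨hzC, hzval⟩, ?_⟩
  rintro w ⟨hwC, hwval⟩
  have hkey := key _ (hwC) _ (hzC)
  rw [hwval, hzval] at hkey
  have h0 : ‖(2 : ℝ)⁻¹ • (w - z)‖ ^ p ≤ 0 := by linarith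
  have h0' : ‖(2 : ℝ)⁻¹ • (w - z)‖ ^ p = 0 :=
    le_antisymm h0 (Real.rpow_nonneg (norm_nonneg _) _)
  have hn0 : ‖(2 : ℝ)⁻¹ • (w - z)‖ = 0 :=
    (Real.rpow_eq_zero (norm_nonneg _) hpne).mp h0'
  have : (2 : ℝ)⁻¹ • (w - z) = 0 := norm_eq_zero.mp hn0
  have hwz : w - z = 0 := by
    rcases smul_eq_zero.mp this with h | h
    · exact absurd h (by norm_num)
    · exact h
  exact sub_eq_zero.mp hwz
end

section
/- Let E be a real Banach space, let p ∈ (1, 2), and set q := p/(p−1). Assume the p-Clarkson inequality holds in the form: for all f, g ∈ E, ‖(f+g)/2‖^q + ‖(f−g)/2‖^q ≤ ((1/2)‖f‖^p + (1/2)‖g‖^p)^{q/p}. Then for every nonempty closed convex subset C ⊆ E there exists a unique element x ∈ C such that ‖x‖^p = inf{‖y‖^p : y ∈ C}. -/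
/-!
By convexity the midpoint of two points of `C` lies in `C`, so its norm is at least the
infimum. Clarkson's inequality then bounds `‖(f - g)/2‖^q` by the excess of the mean of
`‖f‖^p` and `‖g‖^p` over the infimum. Hence any minimizing sequence is Cauchy, its limit is
a minimizer by completeness and closedness, and two minimizers coincide.
-/

open Filter Topology

def ClarksonInequality (E : Type*) [NormedAddCommGroup E] [NormedSpace ℝ E] (p q : ℝ) : Prop :=
  ∀ f g : E, ‖(2 : ℝ)⁻¹ • (f + g)‖ ^ q + ‖(2 : ℝ)⁻¹ • (f - g)‖ ^ q ≤
    ((1 / 2) * ‖f‖ ^ p + (1 / 2) * ‖g‖ ^ p) ^ (q / p)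

section Clarkson

variable {E : Type*} [NormedAddCommGroup E] [NormedSpace ℝ E] {p q m : ℝ} {C : Set E}

theorem ClarksonInequality.norm_half_sub_rpow_le (hClarkson : ClarksonInequality E p q)
    (hp : 0 < p) (hq : 0 ≤ q) (hconv : Convex ℝ C) (hm0 : 0 ≤ m) (hm : ∀ y ∈ C, m ≤ ‖y‖ ^ p)
    {f g : E} (hf : f ∈ C) (hg : g ∈ C) :
    ‖(2 : ℝ)⁻¹ • (f - g)‖ ^ q ≤
      ((1 / 2) * ‖f‖ ^ p + (1 / 2) * ‖g‖ ^ p) ^ (q / p) - m ^ (q / p) := by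
  have hmid : (2 : ℝ)⁻¹ • (f + g) ∈ C := by
    simpa [smul_add] using hconv hf hg (by norm_num : (0 : ℝ) ≤ 2⁻¹)
      (by norm_num : (0 : ℝ) ≤ 2⁻¹) (by norm_num)
  have hmid_norm : m ^ (q / p) ≤ ‖(2 : ℝ)⁻¹ • (f + g)‖ ^ q :=
    calc m ^ (q / p) ≤ (‖(2 : ℝ)⁻¹ • (f + g)‖ ^ p) ^ (q / p) :=
          Real.rpow_le_rpow hm0 (hm _ hmid) (by positivity)
      _ = ‖(2 : ℝ)⁻¹ • (f + g)‖ ^ q := by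
          rw [← Real.rpow_mul (norm_nonneg _), mul_div_cancel₀ q hp.ne']
  linarith [hClarkson f g]

theorem ClarksonInequality.tendsto_dist (hClarkson : ClarksonInequality E p q)
    (hp : 0 < p) (hq : 0 < q) (hconv : Convex ℝ C) (hm0 : 0 ≤ m) (hm : ∀ y ∈ C, m ≤ ‖y‖ ^ p)
    {ι : Type*} {l : Filter ι} {u v : ι → E} (hu : ∀ i, u i ∈ C) (hv : ∀ i, v i ∈ C)
    (hum : Tendsto (fun i => ‖u i‖ ^ p) l (𝓝 m)) (hvm : Tendsto (fun i => ‖v i‖ ^ p) l (𝓝 m)) :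
    Tendsto (fun i => dist (u i) (v i)) l (𝓝 0) := by
  set δ := fun i => ‖(2 : ℝ)⁻¹ • (u i - v i)‖
  have hgap : Tendsto (fun i => ((1 / 2) * ‖u i‖ ^ p + (1 / 2) * ‖v i‖ ^ p) ^ (q / p) -
      m ^ (q / p)) l (𝓝 0) := by
    have := (((hum.const_mul (1 / 2)).add (hvm.const_mul (1 / 2))).rpow_const (p := q / p)
      (Or.inr (by positivity))).sub_const (m ^ (q / p))
    rwa [← add_mul, add_halves, one_mul, sub_self] at this
  have hδq : Tendsto (fun i => δ i ^ q) l (𝓝 0) :=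
    tendsto_of_tendsto_of_tendsto_of_le_of_le tendsto_const_nhds hgap (fun i => by positivity)
      (fun i => hClarkson.norm_half_sub_rpow_le hp hq.le hconv hm0 hm (hu i) (hv i))
  have hδ : Tendsto δ l (𝓝 0) := by
    have := hδq.rpow_const (p := q⁻¹) (Or.inr (by positivity))
    rw [Real.zero_rpow (inv_ne_zero hq.ne')] at this
    exact this.congr fun i => Real.rpow_rpow_inv (norm_nonneg _) hq.ne'
  have hdist : ∀ i, dist (u i) (v i) = 2 * δ i := by
    simp [δ, dist_eq_norm, norm_smul]
  simpa [hdist] using hδ.const_mul 2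

theorem ClarksonInequality.cauchySeq (hClarkson : ClarksonInequality E p q)
    (hp : 0 < p) (hq : 0 < q) (hconv : Convex ℝ C) (hm0 : 0 ≤ m) (hm : ∀ y ∈ C, m ≤ ‖y‖ ^ p)
    {u : ℕ → E} (hu : ∀ n, u n ∈ C) (hum : Tendsto (fun n => ‖u n‖ ^ p) atTop (𝓝 m)) :
    CauchySeq u := by
  rw [cauchySeq_iff_tendsto_dist_atTop_0, ← prod_atTop_atTop_eq]
  exact hClarkson.tendsto_dist hp hq hconv hm0 hm (fun n => hu n.1) (fun n => hu n.2)
    (hum.comp tendsto_fst) (hum.comp tendsto_snd)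

end Clarkson

theorem exists_unique_norm_pow_minimizer_of_clarkson_lt_two_general
    (E : Type*) [NormedAddCommGroup E] [NormedSpace ℝ E] [CompleteSpace E]
    (p : ℝ) (hp1 : 1 < p)
    (hClarkson : ∀ f g : E,
      ‖(2 : ℝ)⁻¹ • (f + g)‖ ^ (p / (p - 1)) + ‖(2 : ℝ)⁻¹ • (f - g)‖ ^ (p / (p - 1)) ≤
        ((1 / 2) * ‖f‖ ^ p + (1 / 2) * ‖g‖ ^ p) ^ ((p / (p - 1)) / p))
    (C : Set E) (hne : C.Nonempty) (hclosed : IsClosed C) (hconv : Convex ℝ C) :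
    ∃! x : E, x ∈ C ∧ ‖x‖ ^ p = sInf ((fun y => ‖y‖ ^ p) '' C) := by
  have hineq : ClarksonInequality E p (p / (p - 1)) := hClarkson
  have hp : 0 < p := by linarith
  have hq : 0 < p / (p - 1) := div_pos hp (by linarith)
  set m := sInf ((fun y => ‖y‖ ^ p) '' C)
  have hbdd : BddBelow ((fun y => ‖y‖ ^ p) '' C) := ⟨0, by rintro _ ⟨y, -, rfl⟩; positivity⟩
  have hm : ∀ y ∈ C, m ≤ ‖y‖ ^ p := fun y hy => csInf_le hbdd ⟨y, hy, rfl⟩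
  have hm0 : 0 ≤ m := Real.sInf_nonneg (by rintro _ ⟨y, -, rfl⟩; positivity)
  obtain ⟨s, -, hs, hsC⟩ := exists_seq_tendsto_sInf (hne.image _) hbdd
  choose u huC hus using hsC
  have hum : Tendsto (fun n => ‖u n‖ ^ p) atTop (𝓝 m) := by simpa only [hus] using hs
  obtain ⟨x, hx⟩ := cauchySeq_tendsto_of_complete (hineq.cauchySeq hp hq hconv hm0 hm huC hum)
  have hxC : x ∈ C := hclosed.mem_of_tendsto hx (Eventually.of_forall huC)
  have hxm : ‖x‖ ^ p = m := tendsto_nhds_unique (hx.norm.rpow_const (Or.inr hp.le)) hum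
  refine ⟨x, ⟨hxC, hxm⟩, fun y ⟨hyC, hym⟩ => ?_⟩
  have hyx := hineq.tendsto_dist hp hq hconv hm0 hm (l := (atTop : Filter ℕ))
    (fun _ => hyC) (fun _ => hxC) (by rw [hym]; exact tendsto_const_nhds)
    (by rw [hxm]; exact tendsto_const_nhds)
  exact dist_eq_zero.mp (tendsto_const_nhds_iff.mp hyx)

/-- Let `E` be a real Banach space, `p ∈ (1, 2)`, and `q := p / (p - 1)`. Assume the
`p`-Clarkson inequality holds in the form
`‖(f+g)/2‖^q + ‖(f−g)/2‖^q ≤ ((1/2)‖f‖^p + (1/2)‖g‖^p)^(q/p)`.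
Then every nonempty closed convex subset `C ⊆ E` contains a unique element `x`
with `‖x‖^p = inf {‖y‖^p : y ∈ C}`. -/
theorem exists_unique_norm_pow_minimizer_of_clarkson_lt_two
    (E : Type*) [NormedAddCommGroup E] [NormedSpace ℝ E] [CompleteSpace E]
    (p : ℝ) (hp1 : 1 < p) (hp2 : p < 2)
    (hClarkson : ∀ f g : E,
      ‖(2 : ℝ)⁻¹ • (f + g)‖ ^ (p / (p - 1)) + ‖(2 : ℝ)⁻¹ • (f - g)‖ ^ (p / (p - 1)) ≤
        ((1 / 2) * ‖f‖ ^ p + (1 / 2) * ‖g‖ ^ p) ^ ((p / (p - 1)) / p))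
    (C : Set E) (hne : C.Nonempty) (hclosed : IsClosed C) (hconv : Convex ℝ C) :
    ∃! x : E, x ∈ C ∧ ‖x‖ ^ p = sInf ((fun y => ‖y‖ ^ p) '' C) :=
  exists_unique_norm_pow_minimizer_of_clarkson_lt_two_general E p hp1 hClarkson C hne hclosed hconv
end

section
/- Let (X, 𝒜, μ) be a measure space and let S be a nonempty family of μ-a.e. equivalence classes of nonnegative functions belonging to L¹(μ), satisfying: (i) if G₁, G₂ ∈ S then the pointwise minimum min(G₁, G₂) ∈ S; and (ii) S is closed in L¹(μ), i.e., if Gₙ ∈ S for all n and Gₙ → G in L¹(μ), then G ∈ S. Then there exists G₀ ∈ S such that G₀ ≤ G μ-a.e. for every G ∈ S; this G₀ is unique up to μ-a.e. equality, and its L¹-norm satisfies ‖G₀‖_{L¹(μ)} = inf{‖G‖_{L¹(μ)} : G ∈ S}. -/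
open MeasureTheory Filter

lemma my_norm_sub_of_le {X : Type*} [MeasurableSpace X] {μ : Measure X}
    (f g : Lp ℝ 1 μ) (hf : 0 ≤ f) (hfg : f ≤ g) : ‖g - f‖ = ‖g‖ - ‖f‖ := by
  have hf' : ∀ᵐ a ∂μ, 0 ≤ (f : X → ℝ) a := by
    have := (Lp.coeFn_le (0 : Lp ℝ 1 μ) f).mpr hf
    filter_upwards [this, Lp.coeFn_zero ℝ 1 μ] with a h1 h2
    rw [h2] at h1; exact h1
  have hfg' : (f : X → ℝ) ≤ᵐ[μ] g := (Lp.coeFn_le f g).mpr hfg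
  have h1 : ‖g - f‖ = ∫ a, ‖(g - f : Lp ℝ 1 μ) a‖ ∂μ := L1.norm_eq_integral_norm _
  have h2 : ‖g‖ = ∫ a, ‖g a‖ ∂μ := L1.norm_eq_integral_norm _
  have h3 : ‖f‖ = ∫ a, ‖f a‖ ∂μ := L1.norm_eq_integral_norm _
  rw [h1, h2, h3, ← integral_sub ((L1.integrable_coeFn g).norm) ((L1.integrable_coeFn f).norm)]
  refine integral_congr_ae ?_
  filter_upwards [hf', hfg', Lp.coeFn_sub g f] with a h0 hle hsub
  rw [hsub]
  simp only [Pi.sub_apply]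
  rw [Real.norm_of_nonneg (by linarith), Real.norm_of_nonneg (by linarith),
    Real.norm_of_nonneg h0]

/-- Let `S` be a nonempty family of (a.e.-classes of) nonnegative `L¹(μ)` functions that
is closed under pointwise minimum and sequentially closed in `L¹(μ)`. Then there exists
`G₀ ∈ S` with `G₀ ≤ G` μ-a.e. for every `G ∈ S`; such a `G₀` is unique (as an a.e.-class),
and `‖G₀‖_{L¹} = inf {‖G‖_{L¹} : G ∈ S}`. -/
theorem exists_minimal_element_of_lattice_closed
    {X : Type*} [MeasurableSpace X] (μ : Measure X)
    (S : Set (Lp ℝ 1 μ)) (hne : S.Nonempty)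
    (hpos : ∀ G ∈ S, 0 ≤ G)
    (hmin : ∀ G₁ ∈ S, ∀ G₂ ∈ S, G₁ ⊓ G₂ ∈ S)
    (hclosed : ∀ (G : ℕ → Lp ℝ 1 μ) (g : Lp ℝ 1 μ),
      (∀ n, G n ∈ S) → Tendsto G atTop (nhds g) → g ∈ S) :
    ∃ G₀ ∈ S, (∀ G ∈ S, G₀ ≤ G) ∧
      (∀ G₀' ∈ S, (∀ G ∈ S, G₀' ≤ G) → G₀' = G₀) ∧
      ‖G₀‖ = sInf ((fun G : Lp ℝ 1 μ => ‖G‖) '' S) := by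
  set T : Set ℝ := (fun G : Lp ℝ 1 μ => ‖G‖) '' S with hT
  have hTne : T.Nonempty := hne.image _
  have hTbdd : BddBelow T := ⟨0, by rintro x ⟨G, -, rfl⟩; exact norm_nonneg _⟩
  set I := sInf T with hI
  have hIle : ∀ G ∈ S, I ≤ ‖G‖ := fun G hG => csInf_le hTbdd ⟨G, hG, rfl⟩
  -- choose approximating sequence
  have hF : ∀ n : ℕ, ∃ G ∈ S, ‖G‖ < I + 1 / (n + 1) := by
    intro n
    have h : I < I + 1 / (n + 1) := lt_add_of_pos_right _ (by positivity)
    obtain ⟨x, ⟨G, hG, rfl⟩, hx⟩ := exists_lt_of_csInf_lt hTne h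
    exact ⟨G, hG, hx⟩
  choose F hFS hFlt using hF
  -- running minima
  set H : ℕ → Lp ℝ 1 μ := fun n => Nat.rec (F 0) (fun n h => h ⊓ F (n + 1)) n with hHdef
  have hHS : ∀ n, H n ∈ S := by
    intro n; induction n with
    | zero => exact hFS 0
    | succ n ih => exact hmin _ ih _ (hFS (n + 1))
  have hHanti : ∀ n, H (n + 1) ≤ H n := fun n => inf_le_left
  have hHanti' : Antitone H := antitone_nat_of_succ_le hHanti
  have hHleF : ∀ n, H n ≤ F n := by
    intro n; cases n with
    | zero => exact le_refl _
    | succ n => exact inf_le_right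
  have hHpos : ∀ n, 0 ≤ H n := fun n => hpos _ (hHS n)
  have hnorm_le : ∀ n m, n ≤ m → ‖H m‖ ≤ ‖H n‖ := by
    intro n m hnm
    have := my_norm_sub_of_le (H m) (H n) (hHpos m) (hHanti' hnm)
    nlinarith [norm_nonneg (H n - H m)]
  have hHnorm_lt : ∀ n, ‖H n‖ < I + 1 / (n + 1) := by
    intro n
    have h1 : ‖H n‖ ≤ ‖F n‖ := by
      have := my_norm_sub_of_le (H n) (F n) (hHpos n) (hHleF n)
      nlinarith [norm_nonneg (F n - H n)]
    exact h1.trans_lt (hFlt n)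
  -- Cauchy
  have hdist : ∀ N n m, N ≤ n → N ≤ m → dist (H n) (H m) ≤ 1 / (N + 1) := by
    intro N n m hn hm
    wlog hnm : n ≤ m generalizing n m
    · rw [dist_comm]; exact this m n hm hn (le_of_not_ge hnm)
    rw [dist_eq_norm, my_norm_sub_of_le (H m) (H n) (hHpos m) (hHanti' hnm)]
    have h1 : ‖H n‖ ≤ ‖H N‖ := hnorm_le N n hn
    have h2 : I ≤ ‖H m‖ := hIle _ (hHS m)
    have h3 := hHnorm_lt N
    linarith
  have hcauchy : CauchySeq H := by
    refine cauchySeq_of_le_tendsto_0 (fun N => 1 / (N + 1 : ℝ)) (fun n m N hn hm => hdist N n m hn hm) ?_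
    exact tendsto_one_div_add_atTop_nhds_zero_nat
  obtain ⟨G₀, hG₀lim⟩ := cauchySeq_tendsto_of_complete hcauchy
  have hG₀S : G₀ ∈ S := hclosed H G₀ hHS hG₀lim
  have hnormI : ‖G₀‖ = I := by
    have h1 : Tendsto (fun n => ‖H n‖) atTop (nhds ‖G₀‖) :=
      (continuous_norm.tendsto _).comp hG₀lim
    have h2 : Tendsto (fun n => ‖H n‖) atTop (nhds I) := by
      have hlo : ∀ n, I ≤ ‖H n‖ := fun n => hIle _ (hHS n)
      have hhi := hHnorm_lt
      refine tendsto_of_tendsto_of_tendsto_of_le_of_le tendsto_const_nhds ?_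
        hlo (fun n => (hhi n).le)
      have : Tendsto (fun n : ℕ => I + 1 / (n + 1 : ℝ)) atTop (nhds (I + 0)) :=
        tendsto_const_nhds.add tendsto_one_div_add_atTop_nhds_zero_nat
      simpa using this
    exact tendsto_nhds_unique h1 h2
  have hGmin : ∀ G ∈ S, G₀ ≤ G := by
    intro G hG
    have hIG : G₀ ⊓ G ∈ S := hmin _ hG₀S _ hG
    have h1 : ‖G₀ - G₀ ⊓ G‖ = ‖G₀‖ - ‖G₀ ⊓ G‖ :=
      my_norm_sub_of_le _ _ (hpos _ hIG) inf_le_left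
    have h2 : I ≤ ‖G₀ ⊓ G‖ := hIle _ hIG
    have h3 : ‖G₀ - G₀ ⊓ G‖ = 0 := le_antisymm (by rw [h1, hnormI]; linarith) (norm_nonneg _)
    have h4 : G₀ = G₀ ⊓ G := by
      have := norm_eq_zero.mp h3
      rw [sub_eq_zero] at this; exact this
    exact le_of_inf_eq h4.symm
  refine ⟨G₀, hG₀S, hGmin, ?_, hnormI⟩
  intro G₀' hG₀'S hG₀'min
  exact le_antisymm (hG₀'min _ hG₀S) (hGmin _ hG₀'S)
end
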